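/- arXiv:2008.13623 — 4 statements merged into one kernel-verified Lean document; each statement's English description precedes it below -/
import Mathlib

section
/- Let H be a real Hilbert space and let C : [0,∞) → Conv_H satisfy e(C(t),C(s)) ≤ s − t whenever 0 ≤ t ≤ s. Let y : [0,∞) → H be locally Lipschitz with y(t) ∈ C(t) for every t ≥ 0. Then the following are equivalent: (i) −y′(t) ∈ N_{C(t)}(y(t)) for Lebesgue-a.e. t ∈ [0,T], for every T > 0; (ii) ∫₀ᵀ ⟨y(t) − z(t), y′(t)⟩ dt ≤ 0 for every T > 0 and every bounded Lebesgue-measurable function z : [0,T] → H with z(t) ∈ C(t) for every t ∈ [0,T]. -/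
open Filter Metric Set MeasureTheory Topology Function
open scoped ENNReal NNReal

variable {H : Type*} [NormedAddCommGroup H] [InnerProductSpace ℝ H]

/-- A nonempty closed convex subset of `H` (an element of `Conv_H`). -/
def IsConvexBody (K : Set H) : Prop := K.Nonempty ∧ IsClosed K ∧ Convex ℝ K

/-- The excess `e(A,B) = sup_{x ∈ A} dist(x,B)` of `A` over `B`. -/
noncomputable def excess (A B : Set H) : ℝ≥0∞ := ⨆ x ∈ A, EMetric.infEdist x B

/-- The retraction `ret(C,J)` of the moving set `C` on `J`. -/
noncomputable def ret (C : ℝ → Set H) (J : Set ℝ) : ℝ≥0∞ :=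
  ⨆ (m : ℕ) (t : Fin (m + 1) → ℝ) (_ : StrictMono t) (_ : ∀ i, t i ∈ J),
    ∑ i : Fin m, excess (C (t (Fin.castSucc i))) (C (t (Fin.succ i)))

/-- `C` has locally bounded retraction on `[0,∞)`. -/
def LocBddRet (C : ℝ → Set H) : Prop := ∀ a b : ℝ, 0 ≤ a → ret C (Icc a b) ≠ ⊤

/-- The pointwise variation of `f` on `J`. -/
noncomputable def pVar (f : ℝ → H) (J : Set ℝ) : ℝ≥0∞ :=
  ⨆ (m : ℕ) (t : Fin (m + 1) → ℝ) (_ : StrictMono t) (_ : ∀ i, t i ∈ J),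
    ∑ i : Fin m, edist (f (t (Fin.castSucc i))) (f (t (Fin.succ i)))

/-- `f` has locally bounded variation on `[0,∞)`. -/
def LocBV (f : ℝ → H) : Prop := ∀ a b : ℝ, 0 ≤ a → pVar f (Icc a b) ≠ ⊤

/-- The exterior normal cone `N_K(x)`. -/
def normalCone (K : Set H) (x : H) : Set H :=
  {u : H | ∀ v ∈ K, (inner ℝ (v - x) u : ℝ) ≤ 0}

/-- `p` is the metric projection of `x` onto `K`. -/
def IsProj (K : Set H) (x p : H) : Prop :=
  p ∈ K ∧ ∀ v ∈ K, ‖x - p‖ ≤ ‖x - v‖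

/-- `C(t+) = {x : dist(x, C(s)) → 0 as s → t+}`. -/
def rightLimSet (C : ℝ → Set H) (t : ℝ) : Set H :=
  {x : H | Tendsto (fun s => infDist x (C s)) (𝓝[>] t) (𝓝 0)}

/-- `C(t−)`, with the convention `C(0−) := C(0)`. -/
noncomputable def leftLimSet (C : ℝ → Set H) (t : ℝ) : Set H :=
  if t = 0 then C 0 else {x : H | Tendsto (fun s => infDist x (C s)) (𝓝[<] t) (𝓝 0)}

/-- The continuity set of `C` with respect to the excess. -/
noncomputable def contSet (C : ℝ → Set H) : Set ℝ :=
  {t | excess (C t) (rightLimSet C t) = 0 ∧ excess (leftLimSet C t) (C t) = 0}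

/-!
The implication (i) ⇒ (ii) is integration of a pointwise inequality. For (ii) ⇒ (i), test (ii)
with `z(t) = proj_{C(t)} (y(t) - y'(t))`: the variational inequality of the projection gives
`‖y - z‖² ≤ ⟪y - z, y'⟫` pointwise, so (ii) forces `z = y` a.e., which says exactly
`-y' ∈ N_{C(t)}(y)`.

The work lies in the measurability of `z`. Since `e(C(t), C(s)) ≤ s - t`, the function
`t ↦ dist(x, C(t)) - t` is nonincreasing, hence continuous off a countable set, and there
`t ↦ proj_{C(t)} x` is right-continuous; right-continuous functions are measurable, and a
Carathéodory argument passes from constant `x` to measurable `x(t)`. The Lipschitz bound on `y`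
bounds `y'`, which makes `z` bounded after changing `y'` on a null set.
-/

open scoped InnerProductSpace

section Projection

variable {K : Set H} {x p : H}

omit [InnerProductSpace ℝ H] in
theorem isProj_self (hx : x ∈ K) : IsProj K x x :=
  ⟨hx, fun v _ => by simp⟩

omit [InnerProductSpace ℝ H] in
theorem IsProj.norm_eq_infDist (h : IsProj K x p) : ‖x - p‖ = infDist x K :=
  le_antisymm ((le_infDist ⟨p, h.1⟩).2 fun v hv => dist_eq_norm x v ▸ h.2 v hv)
    (dist_eq_norm x p ▸ infDist_le_dist_of_mem h.1)

theorem IsProj.inner_le_zero (hK : Convex ℝ K) (h : IsProj K x p) :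
    ∀ w ∈ K, ⟪x - p, w - p⟫_ℝ ≤ 0 := by
  have : Nonempty K := ⟨⟨p, h.1⟩⟩
  refine (norm_eq_iInf_iff_real_inner_le_zero hK h.1).1
    (le_antisymm (le_ciInf fun w => h.2 w w.2) ?_)
  exact ciInf_le ⟨0, forall_mem_range.2 fun _ => norm_nonneg _⟩ (⟨p, h.1⟩ : K)

theorem IsProj.sq_norm_sub_le (hK : Convex ℝ K) (h : IsProj K x p) {q : H} (hq : q ∈ K) :
    ‖q - p‖ ^ 2 ≤ ‖x - q‖ ^ 2 - ‖x - p‖ ^ 2 := by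
  have hvar := h.inner_le_zero hK q hq
  have hexp := norm_sub_sq_real (x - p) (q - p)
  rw [sub_sub_sub_cancel_right] at hexp
  nlinarith [sq_nonneg ‖q - p‖]

theorem IsProj.norm_sub_le (hK : Convex ℝ K) {x₁ x₂ p₁ p₂ : H} (h₁ : IsProj K x₁ p₁)
    (h₂ : IsProj K x₂ p₂) : ‖p₁ - p₂‖ ≤ ‖x₁ - x₂‖ := by
  have hvar₁ := h₁.inner_le_zero hK p₂ h₂.1
  have hvar₂ := h₂.inner_le_zero hK p₁ h₁.1
  have hsq : ‖p₁ - p₂‖ ^ 2 ≤ ⟪x₁ - x₂, p₁ - p₂⟫_ℝ := by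
    have : ⟪x₁ - x₂, p₁ - p₂⟫_ℝ - ‖p₁ - p₂‖ ^ 2 =
        -⟪x₁ - p₁, p₂ - p₁⟫_ℝ - ⟪x₂ - p₂, p₁ - p₂⟫_ℝ := by
      rw [← real_inner_self_eq_norm_sq]
      simp only [inner_sub_left, inner_sub_right, real_inner_comm]
      ring
    linarith
  have hcs := real_inner_le_norm (x₁ - x₂) (p₁ - p₂)
  nlinarith [norm_nonneg (p₁ - p₂), norm_nonneg (x₁ - x₂)]

theorem IsProj.sq_norm_sub_le_inner (hK : Convex ℝ K) {y v : H} (h : IsProj K (y - v) p)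
    (hy : y ∈ K) : ‖y - p‖ ^ 2 ≤ ⟪y - p, v⟫_ℝ := by
  have hvar := h.inner_le_zero hK y hy
  rw [show y - v - p = (y - p) - v by abel, inner_sub_left, real_inner_self_eq_norm_sq,
    real_inner_comm] at hvar
  linarith

theorem IsProj.neg_mem_normalCone (hK : Convex ℝ K) {y v : H} (h : IsProj K (y - v) y) :
    -v ∈ normalCone K y := fun w hw => by
  simpa [real_inner_comm] using h.inner_le_zero hK w hw

/-- A metric projection of `x` onto `K`; an arbitrary point when none exists. -/
noncomputable def proj (K : Set H) (x : H) : H :=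
  Classical.epsilon (IsProj K x)

variable [CompleteSpace H]

theorem IsConvexBody.isProj_proj (hK : IsConvexBody K) (x : H) : IsProj K x (proj K x) := by
  obtain ⟨hne, hcl, hconv⟩ := hK
  obtain ⟨p, hp, hmin⟩ := exists_norm_eq_iInf_of_complete_convex hne hcl.isComplete hconv x
  refine Classical.epsilon_spec ⟨p, hp, fun w hw => hmin ▸ ?_⟩
  exact ciInf_le ⟨0, forall_mem_range.2 fun _ => norm_nonneg _⟩ (⟨w, hw⟩ : K)

theorem IsConvexBody.lipschitzWith_proj (hK : IsConvexBody K) : LipschitzWith 1 (proj K) :=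
  LipschitzWith.of_dist_le_mul fun x₁ x₂ => by
    simpa [dist_eq_norm] using (hK.isProj_proj x₁).norm_sub_le hK.2.2 (hK.isProj_proj x₂)

end Projection

section Excess

variable {A B : Set H} {r : ℝ}

omit [InnerProductSpace ℝ H] in
theorem infDist_le_of_excess_le (hr : 0 ≤ r) (h : excess A B ≤ ENNReal.ofReal r) {v : H}
    (hv : v ∈ A) : infDist v B ≤ r := by
  have hv' : infEDist v B ≤ ENNReal.ofReal r :=
    le_trans (le_iSup₂ (f := fun x (_ : x ∈ A) => infEDist x B) v hv) h
  exact (ENNReal.toReal_mono ENNReal.ofReal_ne_top hv').trans_eq (ENNReal.toReal_ofReal hr)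

omit [InnerProductSpace ℝ H] in
theorem infDist_le_infDist_add_of_excess_le (hr : 0 ≤ r) (h : excess A B ≤ ENNReal.ofReal r)
    (hA : A.Nonempty) (x : H) : infDist x B ≤ infDist x A + r := by
  have : infDist x B - r ≤ infDist x A := (le_infDist hA).2 fun v hv => by
    linarith [infDist_le_infDist_add_dist (x := x) (y := v) (s := B),
      infDist_le_of_excess_le hr h hv]
  linarith

end Excess

section Measurability

theorem aestronglyMeasurable_of_ae_tendsto_nhdsGT {β : Type*} [TopologicalSpace β]
    [TopologicalSpace.PseudoMetrizableSpace β] {μ : Measure ℝ} {f : ℝ → β}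
    (hf : ∀ᵐ t ∂μ, Tendsto f (𝓝[>] t) (𝓝 (f t))) : AEStronglyMeasurable f μ := by
  -- `c n t` tends to `t` from the right, and `c n` takes only countably many values
  set c : ℕ → ℝ → ℝ := fun n t => ((⌊t * (n + 1)⌋ : ℝ) + 1) / (n + 1)
  have hsm : ∀ n, StronglyMeasurable (f ∘ c n) := fun n => by
    have hk : StronglyMeasurable fun k : ℤ => f (((k : ℝ) + 1) / (n + 1)) := .of_discrete
    exact hk.comp_measurable (measurable_id.mul_const ((n : ℝ) + 1)).floor
  have hc : ∀ t, Tendsto (fun n => c n t) atTop (𝓝[>] t) := by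
    intro t
    have hlt : ∀ n : ℕ, t < c n t := fun n => by
      rw [lt_div_iff₀ (by positivity)]
      exact Int.lt_floor_add_one _
    have hle : ∀ n : ℕ, c n t ≤ t + 1 / ((n : ℝ) + 1) := fun n => by
      rw [div_le_iff₀ (by positivity), add_mul, one_div_mul_cancel (by positivity)]
      linarith [Int.floor_le (t * (n + 1))]
    refine tendsto_nhdsWithin_iff.2 ⟨?_, Eventually.of_forall hlt⟩
    refine tendsto_of_tendsto_of_tendsto_of_le_of_le tendsto_const_nhds ?_
      (fun n => (hlt n).le) hle
    simpa using (tendsto_const_nhds (x := t)).add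
      (tendsto_one_div_add_atTop_nhds_zero_nat (𝕜 := ℝ))
  refine aestronglyMeasurable_of_tendsto_ae atTop (fun n => (hsm n).aestronglyMeasurable) ?_
  filter_upwards [hf] with t ht
  exact ht.comp (hc t)

theorem AEStronglyMeasurable.comp_caratheodory {α E F : Type*} [MeasurableSpace α]
    {μ : Measure α} [TopologicalSpace E] [TopologicalSpace F]
    [TopologicalSpace.PseudoMetrizableSpace F] [AddCommMonoid F] [ContinuousAdd F]
    {G : α → E → F} (hG : ∀ x, AEStronglyMeasurable (fun t => G t x) μ)
    (hGc : ∀ᵐ t ∂μ, Continuous (G t)) {u : α → E} (hu : AEStronglyMeasurable u μ) :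
    AEStronglyMeasurable (fun t => G t (u t)) μ := by
  classical
  have hsimple : ∀ s : SimpleFunc α E, AEStronglyMeasurable (fun t => G t (s t)) μ := by
    intro s
    have hsum : (fun t => G t (s t)) =
        ∑ x ∈ s.range, fun t => (s ⁻¹' {x}).indicator (fun t => G t x) t := by
      funext t
      rw [Finset.sum_apply, Finset.sum_eq_single (s t)]
      · simp
      · intro x _ hx
        exact indicator_of_notMem (fun h => hx h.symm) _
      · exact fun h => absurd (s.mem_range_self t) h
    rw [hsum]
    exact Finset.aestronglyMeasurable_sum _ fun x _ =>
      (hG x).indicator (s.measurableSet_fiber x)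
  have hmk := hu.stronglyMeasurable_mk
  refine aestronglyMeasurable_of_tendsto_ae atTop (fun n => hsimple (hmk.approx n)) ?_
  filter_upwards [hGc, hu.ae_eq_mk] with t hct hut
  rw [hut]
  exact (hct.tendsto _).comp (hmk.tendsto_approx t)

end Measurability

section MovingSet

variable {C : ℝ → Set H}

omit [InnerProductSpace ℝ H] in
theorem antitoneOn_infDist_sub (hC : ∀ t : ℝ, 0 ≤ t → (C t).Nonempty)
    (hLip : ∀ t s : ℝ, 0 ≤ t → t ≤ s → excess (C t) (C s) ≤ ENNReal.ofReal (s - t)) (x : H) :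
    AntitoneOn (fun t => infDist x (C t) - t) (Ici 0) := fun t ht s _ hts => by
  have := infDist_le_infDist_add_of_excess_le (sub_nonneg.2 hts) (hLip t s ht hts) (hC t ht) x
  dsimp only
  linarith

theorem tendsto_proj_nhdsGT [CompleteSpace H] (hC : ∀ t : ℝ, 0 ≤ t → IsConvexBody (C t))
    (hLip : ∀ t s : ℝ, 0 ≤ t → t ≤ s → excess (C t) (C s) ≤ ENNReal.ofReal (s - t))
    {x : H} {t : ℝ} (ht : 0 ≤ t)
    (hd : Tendsto (fun s => infDist x (C s)) (𝓝[>] t) (𝓝 (infDist x (C t)))) :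
    Tendsto (fun s => proj (C s) x) (𝓝[>] t) (𝓝 (proj (C t) x)) := by
  have hCs : ∀ s, t < s → IsConvexBody (C s) := fun s hs => hC s (ht.trans hs.le)
  set p := proj (C t) x
  have hp := (hC t ht).isProj_proj x
  have hnear : ∀ s, t < s → ∃ q ∈ C s, dist p q < 2 * (s - t) := fun s hs =>
    (infDist_lt_iff (hCs s hs).1).1 <|
      (infDist_le_of_excess_le (by linarith) (hLip t s ht hs.le) hp.1).trans_lt (by linarith)
  choose! q hqC hqp using hnear
  have hst : Tendsto (fun s => s - t) (𝓝[>] t) (𝓝 0) :=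
    tendsto_sub_nhds_zero_iff.2 (tendsto_nhdsWithin_of_tendsto_nhds tendsto_id)
  have hqlim : Tendsto q (𝓝[>] t) (𝓝 p) := by
    refine tendsto_iff_dist_tendsto_zero.2 <|
      squeeze_zero' (Eventually.of_forall fun _ => dist_nonneg) ?_ (by simpa using hst.const_mul 2)
    filter_upwards [self_mem_nhdsWithin] with s hs
    exact (dist_comm p (q s) ▸ hqp s hs).le
  -- `q s ∈ C s` is near `proj (C t) x`, and near `proj (C s) x` since `infDist x (C s)` tends
  -- to `infDist x (C t)`
  have hsq : ∀ s, t < s → ‖q s - proj (C s) x‖ ^ 2 ≤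
      (infDist x (C t) + 2 * (s - t)) ^ 2 - infDist x (C s) ^ 2 := by
    intro s hs
    have hxq : ‖x - q s‖ ≤ infDist x (C t) + 2 * (s - t) := by
      rw [← hp.norm_eq_infDist]
      calc ‖x - q s‖ ≤ ‖x - p‖ + ‖p - q s‖ := norm_sub_le_norm_sub_add_norm_sub _ _ _
        _ ≤ ‖x - p‖ + 2 * (s - t) := by linarith [dist_eq_norm p (q s) ▸ hqp s hs]
    have hps := (hCs s hs).isProj_proj x
    rw [← hps.norm_eq_infDist]
    exact (hps.sq_norm_sub_le (hCs s hs).2.2 (hqC s hs)).trans (by gcongr)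
  have hbound : Tendsto (fun s => (infDist x (C t) + 2 * (s - t)) ^ 2 - infDist x (C s) ^ 2)
      (𝓝[>] t) (𝓝 0) := by
    simpa using (((hst.const_mul 2).const_add (infDist x (C t))).pow 2).sub (hd.pow 2)
  have hdiff : Tendsto (fun s => q s - proj (C s) x) (𝓝[>] t) (𝓝 0) := by
    refine squeeze_zero_norm' ?_ (by simpa using hbound.sqrt)
    filter_upwards [self_mem_nhdsWithin] with s hs
    simpa using Real.abs_le_sqrt (hsq s hs)
  simpa using hqlim.sub hdiff

theorem aestronglyMeasurable_proj [CompleteSpace H] (hC : ∀ t : ℝ, 0 ≤ t → IsConvexBody (C t))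
    (hLip : ∀ t s : ℝ, 0 ≤ t → t ≤ s → excess (C t) (C s) ≤ ENNReal.ofReal (s - t)) (x : H) :
    AEStronglyMeasurable (fun t => proj (C t) x) (volume.restrict (Ici 0)) := by
  set g := fun t => infDist x (C t) - t
  have hS :=
    (antitoneOn_infDist_sub (fun t ht => (hC t ht).1) hLip x).countable_not_continuousWithinAt
  refine aestronglyMeasurable_of_ae_tendsto_nhdsGT ?_
  filter_upwards [ae_restrict_mem measurableSet_Ici,
    ae_restrict_of_ae (measure_eq_zero_iff_ae_notMem.1 (hS.measure_zero volume))] with t ht htS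
  have hg : Tendsto g (𝓝[>] t) (𝓝 (g t)) :=
    (not_not.1 fun h => htS ⟨ht, h⟩).mono (Ioi_subset_Ici ht)
  refine tendsto_proj_nhdsGT hC hLip ht ?_
  simpa [g] using hg.add (tendsto_nhdsWithin_of_tendsto_nhds tendsto_id)

end MovingSet

theorem ae_neg_mem_normalCone_of_integral_inner_nonpos {α : Type*} [MeasurableSpace α]
    {μ : Measure α} {K : α → Set H} {y v p : α → H} (hK : ∀ᵐ t ∂μ, Convex ℝ (K t))
    (hy : ∀ᵐ t ∂μ, y t ∈ K t) (hp : ∀ᵐ t ∂μ, IsProj (K t) (y t - v t) (p t))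
    (hint : Integrable (fun t => ⟪y t - p t, v t⟫_ℝ) μ)
    (hle : ∫ t, ⟪y t - p t, v t⟫_ℝ ∂μ ≤ 0) :
    ∀ᵐ t ∂μ, -v t ∈ normalCone (K t) (y t) := by
  have hsq : ∀ᵐ t ∂μ, ‖y t - p t‖ ^ 2 ≤ ⟪y t - p t, v t⟫_ℝ := by
    filter_upwards [hK, hy, hp] with t hKt hyt hpt
    exact hpt.sq_norm_sub_le_inner hKt hyt
  have hnonneg : 0 ≤ᵐ[μ] fun t => ⟪y t - p t, v t⟫_ℝ :=
    hsq.mono fun t h => (sq_nonneg _).trans h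
  have hzero := (integral_eq_zero_iff_of_nonneg_ae hnonneg hint).1
    (le_antisymm hle (integral_nonneg_of_ae hnonneg))
  filter_upwards [hK, hp, hsq, hzero] with t hKt hpt hsqt hzt
  have hyp : y t = p t := by
    have : ‖y t - p t‖ ^ 2 = 0 := le_antisymm (hsqt.trans_eq hzt) (sq_nonneg _)
    simpa [sub_eq_zero] using this
  rw [← hyp] at hpt
  exact hpt.neg_mem_normalCone hKt

theorem ae_restrict_Icc_neg_mem_normalCone [CompleteSpace H] {C : ℝ → Set H}
    (hC : ∀ t : ℝ, 0 ≤ t → IsConvexBody (C t))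
    (hLip : ∀ t s : ℝ, 0 ≤ t → t ≤ s → excess (C t) (C s) ≤ ENNReal.ofReal (s - t))
    {y y' : ℝ → H} {T : ℝ} {L : ℝ≥0} (hy : LipschitzOnWith L y (Icc 0 T))
    (hyC : ∀ t ∈ Icc 0 T, y t ∈ C t)
    (hy' : ∀ᵐ t, 0 ≤ t → HasDerivWithinAt y (y' t) (Ici 0) t)
    (hint : ∀ z : ℝ → H, AEStronglyMeasurable z (volume.restrict (Icc 0 T)) →
      (∃ M : ℝ, ∀ t ∈ Icc 0 T, ‖z t‖ ≤ M) → (∀ t ∈ Icc 0 T, z t ∈ C t) →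
      ∫ t in Icc 0 T, ⟪y t - z t, y' t⟫_ℝ ≤ 0) :
    ∀ᵐ t ∂volume.restrict (Icc 0 T), -y' t ∈ normalCone (C t) (y t) := by
  set μ := volume.restrict (Icc 0 T)
  have hIcc : ∀ᵐ t ∂μ, t ∈ Icc 0 T := ae_restrict_mem measurableSet_Icc
  have hderiv : ∀ᵐ t ∂μ, t ∈ Ioo 0 T ∧ HasDerivAt y (y' t) t := by
    rw [show μ = volume.restrict (Ioo 0 T) from Measure.restrict_congr_set Ioo_ae_eq_Icc.symm]
    filter_upwards [ae_restrict_mem measurableSet_Ioo, ae_restrict_of_ae hy'] with t ht hdt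
    exact ⟨ht, (hdt ht.1.le).hasDerivAt (Ici_mem_nhds ht.1)⟩
  have hbound : ∀ᵐ t ∂μ, ‖y' t‖ ≤ L :=
    hderiv.mono fun t h => h.2.le_of_lipschitzOn (Icc_mem_nhds h.1.1 h.1.2) hy
  have hym : AEStronglyMeasurable y μ := hy.continuousOn.aestronglyMeasurable measurableSet_Icc
  have hy'm : AEStronglyMeasurable y' μ :=
    (aestronglyMeasurable_deriv y μ).congr (hderiv.mono fun t h => h.2.deriv)
  -- truncating `y'` on a null set makes the selection `z` below bounded everywhere
  set v : ℝ → H := fun t => if ‖y' t‖ ≤ L then y' t else 0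
  have hv : v =ᵐ[μ] y' := hbound.mono fun t h => if_pos h
  have hvL : ∀ t, ‖v t‖ ≤ L := fun t => by
    by_cases h : ‖y' t‖ ≤ L <;> simp [v, h]
  set z : ℝ → H := fun t => proj (C t) (y t - v t)
  have hz : ∀ t ∈ Icc 0 T, IsProj (C t) (y t - v t) (z t) := fun t ht =>
    (hC t ht.1).isProj_proj _
  have hzm : AEStronglyMeasurable z μ :=
    AEStronglyMeasurable.comp_caratheodory (G := fun t => proj (C t))
      (fun x => (aestronglyMeasurable_proj hC hLip x).mono_measure
        (Measure.restrict_mono Icc_subset_Ici_self le_rfl))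
      (hIcc.mono fun t ht => (hC t ht.1).lipschitzWith_proj.continuous)
      (hym.sub (hy'm.congr hv.symm))
  have hzy : ∀ t ∈ Icc 0 T, ‖z t - y t‖ ≤ L := fun t ht => by
    have := (hz t ht).norm_sub_le (hC t ht.1).2.2 (isProj_self (hyC t ht))
    rw [sub_sub_cancel_left, norm_neg] at this
    exact this.trans (hvL t)
  obtain ⟨M, hM⟩ := isCompact_Icc.exists_bound_of_continuousOn hy.continuousOn
  have hzM : ∀ t ∈ Icc 0 T, ‖z t‖ ≤ M + L := fun t ht =>
    (norm_le_norm_add_norm_sub' (z t) (y t)).trans (add_le_add (hM t ht) (hzy t ht))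
  refine ae_neg_mem_normalCone_of_integral_inner_nonpos (p := z)
    (hIcc.mono fun t ht => (hC t ht.1).2.2) (hIcc.mono hyC) ?_ ?_
    (hint z hzm ⟨M + L, hzM⟩ fun t ht => (hz t ht).1)
  · filter_upwards [hIcc, hv] with t ht hvt
    exact hvt ▸ hz t ht
  · refine Integrable.of_bound ((hym.sub hzm).inner hy'm) (L * L) ?_
    filter_upwards [hIcc, hbound] with t ht hbt
    calc ‖⟪y t - z t, y' t⟫_ℝ‖ ≤ ‖y t - z t‖ * ‖y' t‖ := norm_inner_le_norm _ _
      _ ≤ L * L := mul_le_mul (norm_sub_rev (y t) (z t) ▸ hzy t ht) hbt (norm_nonneg _) L.2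

theorem ae_of_forall_ae_restrict_Icc {μ : Measure ℝ} {P : ℝ → Prop}
    (h : ∀ T : ℝ, 0 < T → ∀ᵐ t ∂μ.restrict (Icc 0 T), P t) :
    ∀ᵐ t ∂μ, 0 ≤ t → P t := by
  have hn : ∀ n : ℕ, ∀ᵐ t ∂μ, t ∈ Icc 0 ((n : ℝ) + 1) → P t := fun n =>
    (ae_restrict_iff' measurableSet_Icc).1 (h _ (by positivity))
  filter_upwards [ae_all_iff.2 hn] with t ht ht0
  obtain ⟨n, hn⟩ := exists_nat_ge t
  exact ht n ⟨ht0, by linarith⟩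

/-- Corollary 5.3 (integral formulation, Lipschitz case): for a moving set `C` which is
`1`-Lipschitz continuous with respect to the excess and a locally Lipschitz `y` with
`y(t) ∈ C(t)`, the differential inclusion `−y′(t) ∈ N_{C(t)}(y(t))` a.e. is equivalent to the
variational integral inequality tested on all bounded measurable selections `z` of `C`. -/
theorem integral_formulation_Lipschitz
    [CompleteSpace H]
    (C : ℝ → Set H) (hC : ∀ t : ℝ, 0 ≤ t → IsConvexBody (C t))
    (hLip : ∀ t s : ℝ, 0 ≤ t → t ≤ s → excess (C t) (C s) ≤ ENNReal.ofReal (s - t))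
    (y : ℝ → H) (hy : ∀ a b : ℝ, 0 ≤ a → ∃ L : ℝ≥0, LipschitzOnWith L y (Icc a b))
    (hyC : ∀ t : ℝ, 0 ≤ t → y t ∈ C t)
    (y' : ℝ → H)
    (hy' : ∀ᵐ t ∂(volume : Measure ℝ), 0 ≤ t → HasDerivWithinAt y (y' t) (Ici 0) t) :
    (∀ᵐ t ∂(volume : Measure ℝ), 0 ≤ t → -y' t ∈ normalCone (C t) (y t)) ↔
    (∀ T : ℝ, 0 < T → ∀ z : ℝ → H,
      AEStronglyMeasurable z (volume.restrict (Icc 0 T)) →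
      (∃ M : ℝ, ∀ t ∈ Icc (0:ℝ) T, ‖z t‖ ≤ M) →
      (∀ t ∈ Icc (0:ℝ) T, z t ∈ C t) →
      (∫ t in Icc (0:ℝ) T, (inner ℝ (y t - z t) (y' t) : ℝ)) ≤ 0) := by
  constructor
  · intro hN T _ z _ _ hzC
    refine integral_nonpos_of_ae ?_
    filter_upwards [ae_restrict_mem measurableSet_Icc, ae_restrict_of_ae hN] with t ht hNt
    simpa [inner_neg_right, ← inner_neg_left] using hNt ht.1 (z t) (hzC t ht)
  · intro hint
    refine ae_of_forall_ae_restrict_Icc fun T hT => ?_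
    obtain ⟨L, hL⟩ := hy 0 T le_rfl
    exact ae_restrict_Icc_neg_mem_normalCone hC hLip hL (fun t ht => hyC t ht.1) hy'
      (hint T hT)
end

section
/- Let H be a real Hilbert space, let A, B ∈ Conv_H with ρ := e(A,B) < ∞, and define F : [0,1] → Conv_H by F(0) := A and F(t) := B + D_{(1−t)ρ} for 0 < t ≤ 1, where D_r := {x ∈ H : ‖x‖ ≤ r}. Then e(F(s),F(t)) = (t − s)·e(A,B) for all s, t ∈ [0,1] with s < t; in particular F is e-Lipschitz with constant e(A,B) and is a geodesic with respect to the excess connecting A to B. -/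
/-! The nearest point `p` of the convex body `B` to a point `x` is characterised by
`x - p ∈ N_B(p)`, and every point `p + u` with `u ∈ N_B(p)` still projects to `p`. Hence
`B + D_r` is the closed `r`-thickening of `B`, and moving along a normal ray shows that the
excess of this thickening over `B` is exactly `r` (as soon as `B ≠ H`). Since
`e(C, B_r) = e(C, B) - r` for any thickening `B_r`, the values `e(F(s), B) = (1 - s) ρ`
give `e(F(s), F(t)) = (1 - s) ρ - (1 - t) ρ`. -/

open Filter Metric Set MeasureTheory Topology Function
open scoped ENNReal NNReal Pointwise

variable {H : Type*} [NormedAddCommGroup H] [InnerProductSpace ℝ H]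

open scoped InnerProductSpace

section normalCone

variable {K : Set H} {p x : H}

lemma smul_mem_normalCone {u : H} (hu : u ∈ normalCone K p) {c : ℝ} (hc : 0 ≤ c) :
    c • u ∈ normalCone K p := fun v hv => by
  rw [real_inner_smul_right]
  exact mul_nonpos_of_nonneg_of_nonpos hc (hu v hv)

lemma norm_sub_le_norm_sub_of_sub_mem_normalCone (h : x - p ∈ normalCone K p) {w : H}
    (hw : w ∈ K) : ‖x - p‖ ≤ ‖x - w‖ := by
  have hsq : ‖x - w‖ ^ 2 = ‖x - p‖ ^ 2 - 2 * ⟪w - p, x - p⟫_ℝ + ‖w - p‖ ^ 2 := by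
    rw [real_inner_comm, ← norm_sub_sq_real, sub_sub_sub_cancel_right]
  refine (sq_le_sq₀ (norm_nonneg _) (norm_nonneg _)).1 ?_
  linarith [h w hw, sq_nonneg ‖w - p‖]

lemma infEDist_eq_edist_of_sub_mem_normalCone (hp : p ∈ K) (h : x - p ∈ normalCone K p) :
    infEDist x K = edist x p := by
  refine le_antisymm (infEDist_le_edist_of_mem hp) (le_infEDist.2 fun w hw => ?_)
  simp only [edist_dist, dist_eq_norm]
  exact ENNReal.ofReal_le_ofReal (norm_sub_le_norm_sub_of_sub_mem_normalCone h hw)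

lemma IsConvexBody.exists_sub_mem_normalCone [CompleteSpace H] (hK : IsConvexBody K) (x : H) :
    ∃ p ∈ K, x - p ∈ normalCone K p := by
  obtain ⟨p, hp, hmin⟩ := exists_norm_eq_iInf_of_complete_convex hK.1 hK.2.1.isComplete hK.2.2 x
  refine ⟨p, hp, fun w hw => ?_⟩
  rw [real_inner_comm]
  exact (norm_eq_iInf_iff_real_inner_le_zero hK.2.2 hp).1 hmin w hw

end normalCone

lemma IsConvexBody.add_closedBall_zero [CompleteSpace H] {B : Set H} (hB : IsConvexBody B)
    {r : ℝ} (hr : 0 ≤ r) : B + closedBall (0 : H) r = cthickening r B := by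
  ext x
  constructor
  · rintro ⟨b, hb, v, hv, rfl⟩
    exact mem_cthickening_of_dist_le _ b r B hb (by simpa using hv)
  · intro hx
    obtain ⟨p, hp, hxp⟩ := hB.exists_sub_mem_normalCone x
    rw [mem_cthickening_iff, infEDist_eq_edist_of_sub_mem_normalCone hp hxp, edist_dist,
      ENNReal.ofReal_le_ofReal_iff hr, dist_eq_norm] at hx
    exact ⟨p, hp, x - p, mem_closedBall_zero_iff.2 hx, add_sub_cancel p x⟩

section excess

variable {E : Type*} [NormedAddCommGroup E]

lemma excess_eq_iSup_infEDist (A B : Set E) : excess A B = ⨆ x ∈ A, infEDist x B := rfl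

lemma excess_univ (A : Set E) : excess A univ = 0 := by
  simp [excess_eq_iSup_infEDist, infEDist_zero_of_mem]

lemma excess_cthickening [NormedSpace ℝ E] (A B : Set E) (r : ℝ) :
    excess A (cthickening r B) = excess A B - ENNReal.ofReal r := by
  simp only [excess_eq_iSup_infEDist, infEDist_cthickening, ENNReal.iSup_sub]

lemma excess_cthickening_self_le (B : Set E) (r : ℝ) :
    excess (cthickening r B) B ≤ ENNReal.ofReal r :=
  iSup₂_le fun _ hx => mem_cthickening_iff.1 hx

end excess

lemma IsConvexBody.excess_cthickening_self [CompleteSpace H] {B : Set H} (hB : IsConvexBody B)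
    (hBu : B ≠ univ) {r : ℝ} (hr : 0 ≤ r) :
    excess (cthickening r B) B = ENNReal.ofReal r := by
  refine le_antisymm (excess_cthickening_self_le B r) ?_
  obtain ⟨x, hx⟩ := (ne_univ_iff_exists_notMem B).1 hBu
  obtain ⟨p, hp, hxp⟩ := hB.exists_sub_mem_normalCone x
  have hxp₀ : 0 < ‖x - p‖ := norm_pos_iff.2 (sub_ne_zero.2 fun h => hx (h ▸ hp))
  set q := p + (r / ‖x - p‖) • (x - p)
  have hqp : q - p ∈ normalCone B p := by
    simpa [q] using smul_mem_normalCone hxp (div_nonneg hr hxp₀.le)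
  have hdist : infEDist q B = ENNReal.ofReal r := by
    rw [infEDist_eq_edist_of_sub_mem_normalCone hp hqp, edist_dist, dist_eq_norm]
    simp [q, norm_smul, abs_of_nonneg hr, div_mul_cancel₀ r hxp₀.ne']
  calc ENNReal.ofReal r = infEDist q B := hdist.symm
    _ ≤ excess (cthickening r B) B :=
      le_iSup₂ (f := fun y _ => infEDist y B) q (mem_cthickening_iff.2 hdist.le)

theorem excess_geodesic_general
    [CompleteSpace H]
    (A B : Set H) (hB : IsConvexBody B)
    (ρ : ℝ) (hρ0 : 0 ≤ ρ) (hρ : excess A B = ENNReal.ofReal ρ)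
    (F : ℝ → Set H) (hF0 : F 0 = A)
    (hF : ∀ t : ℝ, 0 < t → t ≤ 1 → F t = B + Metric.closedBall (0 : H) ((1 - t) * ρ)) :
    ∀ s t : ℝ, 0 ≤ s → s < t → t ≤ 1 →
      excess (F s) (F t) = ENNReal.ofReal ((t - s) * ρ) := by
  intro s t hs hst ht
  have hr {τ : ℝ} (hτ : τ ≤ 1) : 0 ≤ (1 - τ) * ρ := mul_nonneg (by linarith) hρ0
  have hFt : F t = cthickening ((1 - t) * ρ) B := by
    rw [hF t (by linarith) ht, hB.add_closedBall_zero (hr ht)]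
  have hFs : excess (F s) B = ENNReal.ofReal ((1 - s) * ρ) := by
    rcases hs.eq_or_lt with rfl | hs₀
    · simpa [hF0] using hρ
    rw [hF s hs₀ (by linarith), hB.add_closedBall_zero (hr (by linarith))]
    rcases hρ0.eq_or_lt with rfl | hρ₀
    · simpa using excess_cthickening_self_le B 0
    have hBu : B ≠ univ := by
      rintro rfl
      exact hρ₀.not_ge (ENNReal.ofReal_eq_zero.1 (hρ.symm.trans (excess_univ A)))
    exact hB.excess_cthickening_self hBu (hr (by linarith))
  rw [hFt, excess_cthickening, hFs, ← ENNReal.ofReal_sub _ (hr ht)]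
  ring_nf

/-- Proposition 6.2: the curve `F(0) = A`, `F(t) = B + D_{(1−t)ρ}` for `0 < t ≤ 1`
(`ρ = e(A,B)`) satisfies `e(F(s),F(t)) = (t − s)·e(A,B)` for `s < t` in `[0,1]`; in
particular it is a geodesic for the excess connecting `A` to `B`. -/
theorem excess_geodesic
    [CompleteSpace H]
    (A B : Set H) (hA : IsConvexBody A) (hB : IsConvexBody B)
    (ρ : ℝ) (hρ0 : 0 ≤ ρ) (hρ : excess A B = ENNReal.ofReal ρ)
    (F : ℝ → Set H) (hF0 : F 0 = A)
    (hF : ∀ t : ℝ, 0 < t → t ≤ 1 → F t = B + Metric.closedBall (0 : H) ((1 - t) * ρ)) :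
    ∀ s t : ℝ, 0 ≤ s → s < t → t ≤ 1 →
      excess (F s) (F t) = ENNReal.ofReal ((t - s) * ρ) :=
  excess_geodesic_general A B hB ρ hρ0 hρ F hF0 hF
end

section
/- Let H be a real Hilbert space, A, B ∈ Conv_H, and x, y ∈ H. Then ‖Proj_A(x) − Proj_B(y)‖² − ‖x − y‖² ≤ 2·dist(x,A)·e(B,A) + 2·dist(y,B)·e(A,B). -/
open Filter Metric Set MeasureTheory Topology Function
open scoped ENNReal NNReal

variable {H : Type*} [NormedAddCommGroup H] [InnerProductSpace ℝ H]

/-! Expanding `‖x - y‖²` around `p - q` gives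
`‖p - q‖² - ‖x - y‖² ≤ 2⟪x - p, q - p⟫ + 2⟪y - q, p - q⟫`. The variational inequality of the
projection onto `A` yields `⟪x - p, q - p⟫ ≤ ⟪x - p, q - a⟫` for every `a ∈ A`, hence
`⟪x - p, q - p⟫ ≤ d(x, A) d(q, A) ≤ d(x, A) e(B, A)` because `q ∈ B`; symmetrically for the second
term. -/

open RealInnerProductSpace

theorem norm_sub_sq_sub_norm_sub_sq_le (x y p q : H) :
    ‖p - q‖ ^ 2 - ‖x - y‖ ^ 2 ≤ 2 * ⟪x - p, q - p⟫ + 2 * ⟪y - q, p - q⟫ := by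
  have hxy : x - y = ((x - p) - (y - q)) + (p - q) := by abel
  have hpq : q - p = -(p - q) := (neg_sub p q).symm
  rw [hxy, norm_add_sq_real, inner_sub_left, hpq, inner_neg_right]
  linarith [sq_nonneg ‖(x - p) - (y - q)‖]

theorem inner_le_norm_mul_infDist {K : Set H} (hK : K.Nonempty) {u p : H}
    (h : ∀ v ∈ K, ⟪u, v - p⟫ ≤ 0) (z : H) : ⟪u, z - p⟫ ≤ ‖u‖ * infDist z K := by
  have := hK.to_subtype
  rw [infDist_eq_iInf, Real.mul_iInf_of_nonneg (norm_nonneg u)]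
  refine le_ciInf fun ⟨v, hv⟩ => ?_
  calc ⟪u, z - p⟫ = ⟪u, z - v⟫ + ⟪u, v - p⟫ := by rw [← inner_add_right, sub_add_sub_cancel]
    _ ≤ ‖u‖ * dist z v + 0 := by
      rw [dist_eq_norm]; exact add_le_add (real_inner_le_norm _ _) (h v hv)
    _ = ‖u‖ * dist z v := add_zero _

section Normed

variable {E : Type*} [NormedAddCommGroup E]

theorem IsProj.infDist_eq {K : Set E} {x p : E} (hp : IsProj K x p) : infDist x K = ‖x - p‖ :=
  le_antisymm (by simpa only [dist_eq_norm] using infDist_le_dist_of_mem hp.1)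
    ((le_infDist ⟨p, hp.1⟩).2 fun v hv => by simpa only [dist_eq_norm] using hp.2 v hv)

theorem ofReal_infDist_le_excess {A B : Set E} {q : E} (hq : q ∈ B) :
    ENNReal.ofReal (infDist q A) ≤ excess B A :=
  ENNReal.ofReal_toReal_le.trans (le_iSup₂ (f := fun z _ => infEDist z A) q hq)

end Normed

namespace IsProj

variable {K : Set H} {x p : H}

theorem inner_sub_le_zero (hK : Convex ℝ K) (hp : IsProj K x p) :
    ∀ v ∈ K, ⟪x - p, v - p⟫ ≤ 0 :=
  (norm_eq_iInf_iff_real_inner_le_zero hK hp.1).1 <| by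
    simpa only [infDist_eq_iInf, dist_eq_norm] using hp.infDist_eq.symm

theorem inner_le_infDist_mul_infDist (hK : Convex ℝ K) (hp : IsProj K x p) (z : H) :
    ⟪x - p, z - p⟫ ≤ infDist x K * infDist z K :=
  hp.infDist_eq ▸ inner_le_norm_mul_infDist ⟨p, hp.1⟩ (hp.inner_sub_le_zero hK) z

end IsProj

theorem projection_excess_estimate_general
    (A B : Set H) (hA : IsConvexBody A) (hB : IsConvexBody B)
    (x y p q : H) (hp : IsProj A x p) (hq : IsProj B y q) :
    ENNReal.ofReal (‖p - q‖ ^ 2 - ‖x - y‖ ^ 2) ≤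
      2 * ENNReal.ofReal (infDist x A) * excess B A +
      2 * ENNReal.ofReal (infDist y B) * excess A B := by
  have hx := hp.inner_le_infDist_mul_infDist hA.2.2 q
  have hy := hq.inner_le_infDist_mul_infDist hB.2.2 p
  have hreal : ‖p - q‖ ^ 2 - ‖x - y‖ ^ 2 ≤
      2 * infDist x A * infDist q A + 2 * infDist y B * infDist p B := by
    linarith [norm_sub_sq_sub_norm_sub_sq_le x y p q]
  calc ENNReal.ofReal (‖p - q‖ ^ 2 - ‖x - y‖ ^ 2)
      ≤ ENNReal.ofReal (2 * infDist x A * infDist q A + 2 * infDist y B * infDist p B) :=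
        ENNReal.ofReal_le_ofReal hreal
    _ ≤ ENNReal.ofReal (2 * infDist x A * infDist q A) +
          ENNReal.ofReal (2 * infDist y B * infDist p B) := ENNReal.ofReal_add_le
    _ = 2 * ENNReal.ofReal (infDist x A) * ENNReal.ofReal (infDist q A) +
          2 * ENNReal.ofReal (infDist y B) * ENNReal.ofReal (infDist p B) := by
        simp only [ENNReal.ofReal_mul' infDist_nonneg, ENNReal.ofReal_ofNat]
    _ ≤ 2 * ENNReal.ofReal (infDist x A) * excess B A +
          2 * ENNReal.ofReal (infDist y B) * excess A B := by
        gcongr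
        exacts [ofReal_infDist_le_excess hq.1, ofReal_infDist_le_excess hp.1]

/-- Moreau's estimate for projections onto two closed convex sets:
`‖Proj_A(x) − Proj_B(y)‖² − ‖x − y‖² ≤ 2 d(x,A) e(B,A) + 2 d(y,B) e(A,B)`. -/
theorem projection_excess_estimate
    [CompleteSpace H]
    (A B : Set H) (hA : IsConvexBody A) (hB : IsConvexBody B)
    (x y p q : H) (hp : IsProj A x p) (hq : IsProj B y q) :
    ENNReal.ofReal (‖p - q‖ ^ 2 - ‖x - y‖ ^ 2) ≤
      2 * ENNReal.ofReal (infDist x A) * excess B A +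
      2 * ENNReal.ofReal (infDist y B) * excess A B :=
  projection_excess_estimate_general A B hA hB x y p q hp hq
end

section
/- Let H be a real Hilbert space, T > 0, and let μ be a positive Borel measure on [0,T) which is finite on compact sets. If f ∈ L¹([0,T), μ; H) (Bochner integrable, in particular μ-essentially separably valued), then μ-a.e. t ∈ [0,T) is a right μ-Lebesgue point of f, i.e. lim_{h↓0} (1/μ([t,t+h])) ∫_{[t,t+h]} ‖f(τ) − f(t)‖ dμ(τ) = 0 for μ-a.e. t ∈ [0,T). -/
open Filter Metric Set MeasureTheory Topology
open scoped ENNReal NNReal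

variable {H : Type*} [NormedAddCommGroup H] [InnerProductSpace ℝ H]

/-!
Let `F x = μ (-∞, x]` and let `G` be its quantile function. Then `G` pushes Lebesgue measure on
`(0, μ ℝ)` forward to `μ`, and more precisely `μ` restricted to `(x, y]` is the image of Lebesgue
measure on `[F x, F y]`. At an atom `t` the averages tend to `0` because
`∫_(t, y] ‖f - f t‖ dμ → 0` while the denominators stay above `μ {t}`. At any other `t`, the
average of `‖f - f t‖` over `[t, y]` is the Lebesgue average of `‖f ∘ G - f (G (F t))‖` over
`[F t, F y]`, so the Lebesgue differentiation theorem for `f ∘ G` at `F t` applies; this needs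
`G (F t) = t` and `F` to increase strictly to the right of `t`, which can only fail when `F t`
lies in the countable set `F '' ℚ`.
-/

theorem Monotone.mem_range_rat_of_eq {F : ℝ → ℝ} (hF : Monotone F) {u v : ℝ} (huv : u < v)
    (h : F u = F v) : F u ∈ range fun q : ℚ => F q := by
  obtain ⟨q, huq, hqv⟩ := exists_rat_btwn huv
  exact ⟨q, le_antisymm (h ▸ hF hqv.le) (hF huq.le)⟩

theorem Real.Ioc_inter_Ioo_ae_eq_Icc {a b c d : ℝ} (hca : c ≤ a) (hbd : b ≤ d) :
    (Ioc a b ∩ Ioo c d : Set ℝ) =ᵐ[volume] Icc a b :=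
  ae_eq_of_subset_of_measure_ge (inter_subset_left.trans Ioc_subset_Icc_self)
    ((measure_congr Ioo_ae_eq_Icc.symm).le.trans (measure_mono fun _ hx =>
      ⟨Ioo_subset_Ioc_self hx, hca.trans_lt hx.1, hx.2.trans_le hbd⟩))
    (measurableSet_Ioc.inter measurableSet_Ioo).nullMeasurableSet measure_Icc_lt_top.ne

theorem MeasureTheory.average_map {α β E : Type*} [MeasurableSpace α] [MeasurableSpace β]
    [NormedAddCommGroup E] [NormedSpace ℝ E] {ν : Measure α} {φ : α → β} (hφ : AEMeasurable φ ν)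
    {g : β → E} (hg : AEStronglyMeasurable g (ν.map φ)) :
    ⨍ y, g y ∂(ν.map φ) = ⨍ x, g (φ x) ∂ν := by
  rw [average_eq, average_eq, integral_map hφ hg, measureReal_def, measureReal_def,
    Measure.map_apply_of_aemeasurable hφ MeasurableSet.univ, preimage_univ]

theorem MeasureTheory.IntegrableOn.ae_tendsto_setAverage_Icc_norm_sub {E : Type*}
    [NormedAddCommGroup E] {g : ℝ → E} {a b : ℝ} (hg : IntegrableOn g (Ioo a b)) :
    ∀ᵐ s, s ∈ Ioo a b → Tendsto (fun z => ⨍ u in Icc s z, ‖g u - g s‖) (𝓝[>] s) (𝓝 0) := by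
  have hφ : Integrable ((Ioo a b).indicator g) := (integrable_indicator_iff measurableSet_Ioo).2 hg
  filter_upwards [(IsUnifLocDoublingMeasure.vitaliFamily volume 1).ae_tendsto_average_norm_sub
    hφ.locallyIntegrable] with s hs hsab
  refine (hs.comp (Real.tendsto_Icc_vitaliFamily_right s)).congr' ?_
  filter_upwards [Ioo_mem_nhdsGT hsab.2] with z hz
  refine setAverage_congr_fun measurableSet_Icc (Eventually.of_forall fun u hu => ?_)
  rw [indicator_of_mem (Icc_subset_Ioo hsab.1 hz.2 hu), indicator_of_mem hsab]

namespace MeasureTheory.Measure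

variable {μ : Measure ℝ}

theorem tendsto_measure_Ioc_nhdsGT [IsFiniteMeasureOnCompacts μ] (t : ℝ) :
    Tendsto (fun y => μ (Ioc t y)) (𝓝[>] t) (𝓝 0) := by
  have hempty : ⋂ y > t, Ioc t y = ∅ := by
    ext x
    simp only [mem_iInter, mem_Ioc, mem_empty_iff_false, iff_false, not_forall]
    by_cases hx : t < x
    · obtain ⟨y, hty, hyx⟩ := exists_between hx
      exact ⟨y, hty, fun h => (h.2.trans_lt hyx).false⟩
    · exact ⟨t + 1, by linarith, fun h => hx h.1⟩
  have := tendsto_measure_biInter_gt (μ := μ) (s := Ioc t) (fun y _ => nullMeasurableSet_Ioc)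
    (fun i j _ hij => Ioc_subset_Ioc_right hij)
    ⟨t + 1, by linarith, ((measure_mono Ioc_subset_Icc_self).trans_lt
      isCompact_Icc.measure_lt_top).ne⟩
  rwa [hempty, measure_empty] at this

theorem isFiniteMeasure_of_measure_Iio_Ici [IsFiniteMeasureOnCompacts μ] {a b : ℝ}
    (ha : μ (Iio a) = 0) (hb : μ (Ici b) = 0) : IsFiniteMeasure μ := by
  refine ⟨calc μ univ ≤ μ (Iio a ∪ Icc a b ∪ Ici b) := measure_mono fun x _ => ?_
    _ ≤ μ (Iio a) + μ (Icc a b) + μ (Ici b) :=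
        (measure_union_le _ _).trans (by gcongr; exact measure_union_le _ _)
    _ < ∞ := by simpa [ha, hb] using isCompact_Icc.measure_lt_top⟩
  rcases lt_or_ge x a with hxa | hax
  · exact Or.inl (Or.inl hxa)
  rcases lt_or_ge x b with hxb | hbx
  · exact Or.inl (Or.inr ⟨hax, hxb.le⟩)
  · exact Or.inr hbx

theorem tendsto_setAverage_Icc_of_measure_singleton_ne_zero [IsFiniteMeasure μ]
    {E : Type*} [NormedAddCommGroup E] {f : ℝ → E} (hf : Integrable f μ) {t : ℝ}
    (hatom : μ {t} ≠ 0) :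
    Tendsto (fun y => ⨍ τ in Icc t y, ‖f τ - f t‖ ∂μ) (𝓝[>] t) (𝓝 0) := by
  have hg : Integrable (fun τ => ‖f τ - f t‖) μ := (hf.sub (integrable_const _)).norm
  have hnum := hg.tendsto_setIntegral_nhds_zero (tendsto_measure_Ioc_nhdsGT t)
  have hpos : 0 < μ.real {t} := ENNReal.toReal_pos hatom isCompact_singleton.measure_lt_top.ne
  refine squeeze_zero' (Eventually.of_forall fun y => ?_)
    (eventually_nhdsWithin_of_forall fun y hy => ?_) (by simpa using hnum.const_mul (μ.real {t})⁻¹)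
  · rw [setAverage_eq, smul_eq_mul]
    positivity
  · have hIcc : ∫ τ in Icc t y, ‖f τ - f t‖ ∂μ = ∫ τ in Ioc t y, ‖f τ - f t‖ ∂μ := by
      rw [← Ioc_union_left (le_of_lt hy), setIntegral_union
        (disjoint_singleton_right.2 fun h => lt_irrefl t h.1) (measurableSet_singleton t)
        hg.integrableOn hg.integrableOn, integral_singleton, sub_self, norm_zero, smul_zero,
        add_zero]
    rw [setAverage_eq, hIcc, smul_eq_mul]
    refine mul_le_mul_of_nonneg_right (inv_anti₀ hpos (measureReal_mono ?_ ?_))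
      (integral_nonneg fun _ => norm_nonneg _)
    · exact singleton_subset_iff.2 ⟨le_rfl, le_of_lt hy⟩
    · exact isCompact_Icc.measure_lt_top.ne

noncomputable def distribFun (μ : Measure ℝ) (x : ℝ) : ℝ := μ.real (Iic x)

/-- Meaningful for `s ∈ Ioo 0 (μ.real univ)` only: elsewhere the set is empty or unbounded below
and `sInf` returns its junk value `0`. -/
noncomputable def quantileFun (μ : Measure ℝ) (s : ℝ) : ℝ := sInf {u | s ≤ μ.distribFun u}

section Finite

variable [IsFiniteMeasure μ]

theorem monotone_distribFun : Monotone μ.distribFun := fun _ _ h =>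
  measureReal_mono (Iic_subset_Iic.2 h)

theorem distribFun_le (x : ℝ) : μ.distribFun x ≤ μ.real univ := measureReal_mono (subset_univ _)

theorem distribFun_eq_add {x y : ℝ} (hxy : x ≤ y) :
    μ.distribFun y = μ.distribFun x + μ.real (Ioc x y) := by
  rw [distribFun, distribFun, ← Iic_union_Ioc_eq_Iic hxy,
    measureReal_union (Iic_disjoint_Ioc le_rfl) measurableSet_Ioc]

theorem tendsto_distribFun_nhdsGT (x : ℝ) :
    Tendsto μ.distribFun (𝓝[>] x) (𝓝 (μ.distribFun x)) := by
  have h := ((ENNReal.tendsto_toReal ENNReal.zero_ne_top).comp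
    (tendsto_measure_Ioc_nhdsGT (μ := μ) x)).const_add (μ.distribFun x)
  rw [ENNReal.toReal_zero, add_zero] at h
  exact h.congr' (eventually_nhdsWithin_of_forall fun y hy =>
    (distribFun_eq_add (le_of_lt hy)).symm)

theorem tendsto_distribFun_atBot : Tendsto μ.distribFun atBot (𝓝 0) := by
  have hempty : ⋂ x : ℝ, Iic x = ∅ :=
    eq_empty_of_forall_notMem fun x hx => by
      have : x ≤ x - 1 := mem_iInter.1 hx (x - 1)
      linarith
  have h := tendsto_measure_iInter_atBot (μ := μ) (fun x => measurableSet_Iic.nullMeasurableSet)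
    (fun _ _ => Iic_subset_Iic.2) ⟨0, measure_ne_top μ _⟩
  rw [hempty, measure_empty] at h
  exact ENNReal.toReal_zero ▸ (ENNReal.tendsto_toReal ENNReal.zero_ne_top).comp h

theorem tendsto_distribFun_atTop : Tendsto μ.distribFun atTop (𝓝 (μ.real univ)) :=
  (ENNReal.tendsto_toReal (measure_ne_top μ univ)).comp (tendsto_measure_Iic_atTop μ)

theorem quantileFun_le_iff {s : ℝ} (hs : s ∈ Ioo 0 (μ.real univ)) {u : ℝ} :
    μ.quantileFun s ≤ u ↔ s ≤ μ.distribFun u := by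
  set S := {u | s ≤ μ.distribFun u}
  obtain ⟨v, hv⟩ := ((tendsto_distribFun_atTop (μ := μ)).eventually_const_lt hs.2).exists
  obtain ⟨w, hw⟩ := ((tendsto_distribFun_atBot (μ := μ)).eventually_lt_const hs.1).exists
  have hbdd : BddBelow S := ⟨w, fun u hu =>
    (monotone_distribFun.reflect_lt (hw.trans_le hu)).le⟩
  have hmem : s ≤ μ.distribFun (sInf S) := by
    refine ge_of_tendsto (tendsto_distribFun_nhdsGT (sInf S))
      (eventually_nhdsWithin_of_forall fun y hy => ?_)
    obtain ⟨u, hu, huy⟩ := exists_lt_of_csInf_lt ⟨v, hv.le⟩ hy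
    exact hu.trans (monotone_distribFun huy.le)
  exact ⟨fun h => hmem.trans (monotone_distribFun h), fun h => csInf_le hbdd h⟩

theorem monotoneOn_quantileFun : MonotoneOn μ.quantileFun (Ioo 0 (μ.real univ)) :=
  fun _ hs _ hs' hss' => (quantileFun_le_iff hs).2 <|
    hss'.trans ((quantileFun_le_iff hs').1 le_rfl)


theorem quantileFun_preimage_Ioc_inter (x y : ℝ) :
    μ.quantileFun ⁻¹' Ioc x y ∩ Ioo 0 (μ.real univ) =
      Ioc (μ.distribFun x) (μ.distribFun y) ∩ Ioo 0 (μ.real univ) := by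
  ext s
  simp only [mem_inter_iff, mem_preimage, mem_Ioc, and_congr_left_iff]
  intro hs
  rw [← not_le, ← not_le, quantileFun_le_iff hs, quantileFun_le_iff hs]

theorem aemeasurable_quantileFun :
    AEMeasurable μ.quantileFun (volume.restrict (Ioo 0 (μ.real univ))) :=
  aemeasurable_restrict_of_monotoneOn measurableSet_Ioo monotoneOn_quantileFun

theorem restrict_Ioo_preimage_quantileFun_Ioc (x y : ℝ) :
    (volume.restrict (Ioo 0 (μ.real univ))).restrict (μ.quantileFun ⁻¹' Ioc x y) =
      volume.restrict (Icc (μ.distribFun x) (μ.distribFun y)) := by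
  rw [Measure.restrict_restrict' measurableSet_Ioo, quantileFun_preimage_Ioc_inter]
  exact Measure.restrict_congr_set
    (Real.Ioc_inter_Ioo_ae_eq_Icc measureReal_nonneg (distribFun_le y))

theorem map_quantileFun : (volume.restrict (Ioo 0 (μ.real univ))).map μ.quantileFun = μ := by
  refine (Measure.ext_of_Ioc μ _ fun x y hxy => ?_).symm
  rw [Measure.map_apply_of_aemeasurable aemeasurable_quantileFun measurableSet_Ioc,
    ← Measure.restrict_apply_univ (μ := volume.restrict _), restrict_Ioo_preimage_quantileFun_Ioc,
    Measure.restrict_apply_univ, Real.volume_Icc, distribFun_eq_add hxy.le, add_sub_cancel_left,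
    ofReal_measureReal]

theorem restrict_Ioc_eq_map_quantileFun (x y : ℝ) :
    μ.restrict (Ioc x y) =
      (volume.restrict (Icc (μ.distribFun x) (μ.distribFun y))).map μ.quantileFun := by
  conv_lhs => rw [← map_quantileFun (μ := μ)]
  rw [Measure.restrict_map_of_aemeasurable aemeasurable_quantileFun measurableSet_Ioc,
    restrict_Ioo_preimage_quantileFun_Ioc]

theorem distribFun_quantileFun {s : ℝ} (hs : s ∈ Ioo 0 (μ.real univ))
    (hatom : μ {μ.quantileFun s} = 0) : μ.distribFun (μ.quantileFun s) = s := by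
  refine le_antisymm (ENNReal.toReal_le_of_le_ofReal hs.1.le ?_) ((quantileFun_le_iff hs).1 le_rfl)
  have hsub : μ.quantileFun ⁻¹' Iio (μ.quantileFun s) ∩ Ioo 0 (μ.real univ) ⊆ Ioo 0 s :=
    fun s' hs' => ⟨hs'.2.1, lt_of_not_ge fun h => (monotoneOn_quantileFun hs hs'.2 h).not_gt hs'.1⟩
  calc μ (Iic (μ.quantileFun s)) = μ (Iio (μ.quantileFun s)) :=
        measure_congr (Iio_ae_eq_Iic' hatom).symm
    _ = (volume.restrict (Ioo 0 (μ.real univ))).map μ.quantileFun (Iio (μ.quantileFun s)) := by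
        rw [map_quantileFun]
    _ = volume (μ.quantileFun ⁻¹' Iio (μ.quantileFun s) ∩ Ioo 0 (μ.real univ)) := by
        rw [Measure.map_apply_of_aemeasurable aemeasurable_quantileFun measurableSet_Iio,
          Measure.restrict_apply' measurableSet_Ioo]
    _ ≤ volume (Ioo 0 s) := measure_mono hsub
    _ = ENNReal.ofReal s := by rw [Real.volume_Ioo, sub_zero]

theorem ae_imp_of_ae_restrict_Ioo {P : ℝ → Prop}
    (hP : ∀ᵐ s ∂(volume.restrict (Ioo 0 (μ.real univ))), P s) :
    ∀ᵐ t ∂μ, μ {t} = 0 → P (μ.distribFun t) := by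
  set ν := volume.restrict (Ioo 0 (μ.real univ))
  set N := toMeasurable ν {s | ¬P s}
  set A := {t : ℝ | 0 < μ {t}}
  have hA : A.Countable := Measure.countable_meas_pos_of_disjoint_iUnion
    (fun _ => measurableSet_singleton _) fun _ _ h => disjoint_singleton.2 h
  have hmeas : MeasurableSet (μ.distribFun ⁻¹' N \ A) :=
    (monotone_distribFun.measurable (measurableSet_toMeasurable _ _)).diff hA.measurableSet
  have hsub : μ.quantileFun ⁻¹' (μ.distribFun ⁻¹' N \ A) ≤ᵐ[ν] N := by
    filter_upwards [ae_restrict_mem measurableSet_Ioo] with s hs ⟨hN, hnA⟩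
    rwa [← distribFun_quantileFun hs (not_lt.1 hnA |>.antisymm zero_le)]
  have hbad : μ (μ.distribFun ⁻¹' N \ A) = 0 := by
    refine le_antisymm ?_ zero_le
    calc μ (μ.distribFun ⁻¹' N \ A) = ν.map μ.quantileFun (μ.distribFun ⁻¹' N \ A) := by
          rw [map_quantileFun]
      _ ≤ ν N := by
          rw [Measure.map_apply_of_aemeasurable aemeasurable_quantileFun hmeas]
          exact measure_mono_ae hsub
      _ = 0 := by rw [measure_toMeasurable]; exact ae_iff.1 hP
  refine ae_iff.2 (measure_mono_null (fun t ht => ?_) hbad)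
  simp only [mem_ofPred_eq, Classical.not_imp] at ht
  exact ⟨subset_toMeasurable _ _ ht.2, fun h => h.ne' ht.1⟩

theorem aemeasurable_quantileFun_Icc (x y : ℝ) :
    AEMeasurable μ.quantileFun (volume.restrict (Icc (μ.distribFun x) (μ.distribFun y))) := by
  rw [← restrict_Ioo_preimage_quantileFun_Ioc]
  exact aemeasurable_quantileFun.restrict

theorem quantileFun_distribFun {t : ℝ} (ht : μ.distribFun t ∈ Ioo 0 (μ.real univ))
    (hrat : μ.distribFun t ∉ range fun q : ℚ => μ.distribFun q) :
    μ.quantileFun (μ.distribFun t) = t := by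
  refine ((quantileFun_le_iff ht).2 le_rfl).antisymm (not_lt.1 fun hlt => hrat ?_)
  have heq := le_antisymm (monotone_distribFun hlt.le) ((quantileFun_le_iff ht).1 le_rfl)
  rw [← heq]
  exact monotone_distribFun.mem_range_rat_of_eq hlt heq

theorem tendsto_setAverage_Icc_of_measure_singleton_eq_zero {E : Type*} [NormedAddCommGroup E]
    {f : ℝ → E} (hf : AEStronglyMeasurable f μ) {t : ℝ} (hatom : μ {t} = 0)
    (hs : μ.distribFun t ∈ Ioo 0 (μ.real univ))
    (hrat : μ.distribFun t ∉ range fun q : ℚ => μ.distribFun q)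
    (hleb : Tendsto (fun z => ⨍ u in Icc (μ.distribFun t) z,
      ‖f (μ.quantileFun u) - f (μ.quantileFun (μ.distribFun t))‖) (𝓝[>] (μ.distribFun t)) (𝓝 0)) :
    Tendsto (fun y => ⨍ τ in Icc t y, ‖f τ - f t‖ ∂μ) (𝓝[>] t) (𝓝 0) := by
  rw [quantileFun_distribFun hs hrat] at hleb
  have hF : Tendsto μ.distribFun (𝓝[>] t) (𝓝[>] (μ.distribFun t)) :=
    tendsto_nhdsWithin_iff.2 ⟨tendsto_distribFun_nhdsGT t, eventually_nhdsWithin_of_forall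
      fun y hy => (monotone_distribFun (le_of_lt hy)).lt_of_ne fun h =>
        hrat (monotone_distribFun.mem_range_rat_of_eq hy h)⟩
  refine (hleb.comp hF).congr fun y => ?_
  have hmeas : AEStronglyMeasurable (fun τ => ‖f τ - f t‖) (μ.restrict (Ioc t y)) :=
    (hf.restrict.sub aestronglyMeasurable_const).norm
  rw [restrict_Ioc_eq_map_quantileFun] at hmeas
  rw [Function.comp_apply, Measure.restrict_congr_set (Ioc_ae_eq_Icc' hatom).symm,
    restrict_Ioc_eq_map_quantileFun, average_map (aemeasurable_quantileFun_Icc t y) hmeas]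

theorem ae_tendsto_setAverage_Icc_norm_sub {E : Type*} [NormedAddCommGroup E] {f : ℝ → E}
    (hf : Integrable f μ) :
    ∀ᵐ t ∂μ, Tendsto (fun y => ⨍ τ in Icc t y, ‖f τ - f t‖ ∂μ) (𝓝[>] t) (𝓝 0) := by
  have hfG : IntegrableOn (f ∘ μ.quantileFun) (Ioo 0 (μ.real univ)) := by
    rw [← map_quantileFun (μ := μ)] at hf
    exact hf.comp_aemeasurable aemeasurable_quantileFun
  have hP : ∀ᵐ s ∂(volume.restrict (Ioo 0 (μ.real univ))), s ∈ Ioo 0 (μ.real univ) ∧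
      s ∉ (range fun q : ℚ => μ.distribFun q) ∧
      Tendsto (fun z => ⨍ u in Icc s z, ‖f (μ.quantileFun u) - f (μ.quantileFun s)‖)
        (𝓝[>] s) (𝓝 0) :=
    (ae_restrict_mem measurableSet_Ioo).and <|
      (ae_restrict_of_ae (measure_eq_zero_iff_ae_notMem.1
        ((countable_range _).measure_zero volume))).and <|
      (ae_restrict_iff' measurableSet_Ioo).2 hfG.ae_tendsto_setAverage_Icc_norm_sub
  filter_upwards [ae_imp_of_ae_restrict_Ioo hP] with t ht
  by_cases hatom : μ {t} = 0
  · obtain ⟨hs, hrat, hleb⟩ := ht hatom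
    exact tendsto_setAverage_Icc_of_measure_singleton_eq_zero hf.1 hatom hs hrat hleb
  · exact tendsto_setAverage_Icc_of_measure_singleton_ne_zero hf hatom

end Finite

end MeasureTheory.Measure

theorem ae_right_lebesgue_point_general
    (T : ℝ)
    (μ : Measure ℝ) [IsFiniteMeasureOnCompacts μ]
    (hμ0 : μ (Iio 0) = 0) (hμT : μ (Ici T) = 0)
    (f : ℝ → H) (hf : Integrable f μ) :
    ∀ᵐ t ∂μ, t ∈ Ico 0 T →
      Tendsto (fun h : ℝ =>
          (∫ τ in Icc t (t + h), ‖f τ - f t‖ ∂μ) / (μ (Icc t (t + h))).toReal)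
        (𝓝[>] 0) (𝓝 0) := by
  have := Measure.isFiniteMeasure_of_measure_Iio_Ici hμ0 hμT
  filter_upwards [Measure.ae_tendsto_setAverage_Icc_norm_sub hf] with t ht _
  have hshift : Tendsto (fun h : ℝ => t + h) (𝓝[>] 0) (𝓝[>] t) := by
    refine tendsto_nhdsWithin_iff.2 ⟨tendsto_nhdsWithin_of_tendsto_nhds ?_,
      eventually_nhdsWithin_of_forall fun h (hh : 0 < h) => lt_add_of_pos_right t hh⟩
    simpa using (continuous_const_add t).tendsto 0
  refine (ht.comp hshift).congr fun h => ?_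
  rw [Function.comp_apply, setAverage_eq, smul_eq_mul, measureReal_def, div_eq_inv_mul]

/-- Right `μ`-Lebesgue points: if `μ` is a positive Borel measure carried by `[0,T)` which is
finite on compact sets and `f` is Bochner `μ`-integrable, then for `μ`-a.e. `t ∈ [0,T)` one has
`(1/μ([t,t+h])) ∫_{[t,t+h]} ‖f(τ) − f(t)‖ dμ(τ) → 0` as `h ↓ 0`. -/
theorem ae_right_lebesgue_point
    [CompleteSpace H]
    (T : ℝ) (hT : 0 < T)
    (μ : Measure ℝ) [IsFiniteMeasureOnCompacts μ]
    (hμ0 : μ (Iio 0) = 0) (hμT : μ (Ici T) = 0)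
    (f : ℝ → H) (hf : Integrable f μ) :
    ∀ᵐ t ∂μ, t ∈ Ico 0 T →
      Tendsto (fun h : ℝ =>
          (∫ τ in Icc t (t + h), ‖f τ - f t‖ ∂μ) / (μ (Icc t (t + h))).toReal)
        (𝓝[>] 0) (𝓝 0) :=
  ae_right_lebesgue_point_general T μ hμ0 hμT f hf
end
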